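/- arXiv:math/0507355 — 3 statements merged into one kernel-verified Lean document; each statement's English description precedes it below -/
import Mathlib

section
/- Let Γ be a Bieberbach group of dimension n with translation lattice A, holonomy group H = Γ/A, and holonomy representation φ: H → Aut(A). Then the outer automorphism group Out(Γ) = Aut(Γ)/Inn(Γ) is finite if and only if the normalizer of the image φ(H) in Aut(A) is finite. -/
/-- Old Mathlib `Monoid.IsTorsionFree` (removed): no nontrivial element has finite order. -/
def Monoid.IsTorsionFree (G : Type*) [Monoid G] : Prop :=
  ∀ g : G, g ≠ 1 → ¬IsOfFinOrder g

/-!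
Torsion-freeness makes `A` characteristic, so restriction is a homomorphism
`r : Aut Γ → Aut A`; its image normalizes the holonomy group `φ(H)`, and `r(Inn Γ) = φ(H)`.

If the normalizer `N` of `φ(H)` is finite, `ker r` has finite index in `Aut Γ`. Sending
`k ∈ ker r` to the cocycle `g ↦ k(g) g⁻¹` gives a homomorphism `ker r → H¹(H, A)` whose kernel
consists of inner automorphisms, and `H¹(H, A)` is finite: it is finitely generated and killed
by `|H|`. So `Inn Γ` has finite index.

If `Out Γ` is finite, so is `r(Aut Γ)`, a finite extension of `r(Inn Γ)`. The centralizer `C`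
of `φ(H)` acts on `H²(H, A)`, which is finite for the same reason, and an element of `C` fixing
the class of the extension `A → Γ → H` is the restriction of an automorphism of `Γ`. So the
stabilizer of that class, of finite index in `C`, embeds in `r(Aut Γ)`; hence `C` is finite,
and so is `N`, since `N / C` embeds in `Aut(φ(H))`.
-/

open scoped IsMulCommutative

theorem Commute.of_commute_pow_of_commute_conj {G : Type*} [Group G]
    (htf : Monoid.IsTorsionFree G) {a b : G} {k : ℕ} (hk : k ≠ 0) (hpow : Commute a (b ^ k))
    (hconj : Commute (a * b * a⁻¹) b) : Commute a b := by
  have hcomm : (a * b * a⁻¹ * b⁻¹) ^ k = 1 := by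
    rw [(hconj.inv_right).mul_pow, conj_pow, hpow.eq, inv_pow]
    group
  by_contra h
  refine htf _ ?_ (isOfFinOrder_iff_pow_eq_one.mpr ⟨k, Nat.pos_of_ne_zero hk, hcomm⟩)
  rwa [Ne, mul_inv_eq_one, mul_inv_eq_iff_eq_mul]

theorem Subgroup.fg_of_fg_commGroup {M : Type*} [CommGroup M] [Group.FG M] (S : Subgroup M) :
    S.FG := by
  have : Module.Finite ℤ (Additive M) := Module.Finite.iff_addGroup_fg.mpr inferInstance
  have := IsNoetherian.noetherian (AddSubgroup.toIntSubmodule S.toAddSubgroup)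
  rwa [Submodule.fg_iff_addSubgroup_fg, AddSubgroup.toIntSubmodule_toAddSubgroup,
    ← Subgroup.fg_iff_add_fg] at this

theorem MulAut.mul_conj_mul_inv {G : Type*} [Group G] (α : MulAut G) (g : G) :
    α * MulAut.conj g * α⁻¹ = MulAut.conj (α g) := by
  ext x
  simp [MulAut.mul_apply]

theorem MulAut.normal_range_conj {G : Type*} [Group G] :
    (MulAut.conj : G →* MulAut G).range.Normal :=
  ⟨by rintro _ ⟨g, rfl⟩ α; exact ⟨α g, (α.mul_conj_mul_inv g).symm⟩⟩

theorem Subgroup.finiteIndex_of_isFiniteRelIndex {G : Type*} [Group G] (H K : Subgroup G)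
    [H.IsFiniteRelIndex K] [K.FiniteIndex] : H.FiniteIndex := by
  have : (H ⊓ K).FiniteIndex := by
    rw [Subgroup.finiteIndex_iff, ← Subgroup.relIndex_mul_index inf_le_right,
      Subgroup.inf_relIndex_right]
    exact mul_ne_zero Subgroup.relIndex_ne_zero Subgroup.FiniteIndex.index_ne_zero
  exact Subgroup.finiteIndex_of_le (inf_le_left : H ⊓ K ≤ H)

theorem MonoidHom.finite_range_of_finite_map {G G' : Type*} [Group G] [Group G'] (f : G →* G')
    (N : Subgroup G) [N.FiniteIndex] [Finite (N.map f)] : Finite f.range := by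
  have : f.ker.IsFiniteRelIndex N := ⟨by rw [Subgroup.relIndex_ker]; exact Nat.card_pos.ne'⟩
  have := f.ker.finiteIndex_of_isFiniteRelIndex N
  exact Nat.finite_of_card_ne_zero (Subgroup.index_ker f ▸ Subgroup.FiniteIndex.index_ne_zero)

theorem Subgroup.finite_normalizer_of_finite_centralizer {G : Type*} [Group G] (H : Subgroup G)
    [Finite H] [Finite (Subgroup.centralizer (H : Set G))] :
    Finite (Subgroup.normalizer (H : Set G)) := by
  rw [H.normalizerMonoidHom.finite_iff_finite_ker_range, Subgroup.normalizerMonoidHom_ker]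
  refine ⟨Finite.of_injective (fun x => (⟨x.1, x.2⟩ : Subgroup.centralizer (H : Set G))) ?_,
    inferInstance⟩
  intro x y h
  exact Subtype.ext (Subtype.ext (congrArg Subtype.val h :))

theorem Subgroup.finiteIndex_comap_of_pow_mem {G M : Type*} [Group G] [CommGroup M] (f : G →* M)
    (hfg : f.range.FG) (B : Subgroup M) {m : ℕ} (hm : m ≠ 0) (h : ∀ g, f g ^ m ∈ B) :
    (B.comap f).FiniteIndex := by
  have := f.range.isFiniteRelIndex_map_powMonoidHom_of_fg hfg hm
  have : B.IsFiniteRelIndex f.range := Subgroup.isFiniteRelIndex_of_le_left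
      (H := f.range.map (powMonoidHom m)) _ (by
    rintro _ ⟨_, ⟨g, rfl⟩, rfl⟩
    exact h g)
  rw [Subgroup.finiteIndex_iff, Subgroup.index_comap]
  exact Subgroup.relIndex_ne_zero

theorem MulAction.QuotientAction.of_smul_mem {X G : Type*} [Monoid X] [Group G]
    [MulDistribMulAction X G] {H : Subgroup G} (h : ∀ (b : X), ∀ g ∈ H, b • g ∈ H) :
    MulAction.QuotientAction X H :=
  ⟨fun b a a' ha => by simpa [smul_mul', smul_inv'] using h b _ ha⟩

namespace groupCohomology

variable {G M : Type*} [Group G] [CommGroup M] [MulDistribMulAction G M]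

def mulCoboundaries₁ : Subgroup (G → M) where
  carrier := {f | IsMulCoboundary₁ f}
  one_mem' := ⟨1, fun g => by simp⟩
  mul_mem' := by
    rintro f f' ⟨x, hx⟩ ⟨x', hx'⟩
    exact ⟨x * x', fun g => by simp [← hx, ← hx', smul_mul', mul_div_mul_comm]⟩
  inv_mem' := by
    rintro f ⟨x, hx⟩
    exact ⟨x⁻¹, fun g => by rw [Pi.inv_apply, smul_inv', inv_div_inv, ← hx, inv_div]⟩

def mulCocycles₂ : Subgroup (G × G → M) where
  carrier := {f | IsMulCocycle₂ f}
  one_mem' := fun g h j => by simp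
  mul_mem' := by
    intro f f' hf hf' g h j
    simp only [Pi.mul_apply, smul_mul', mul_mul_mul_comm, hf g h j, hf' g h j]
  inv_mem' := by
    intro f hf g h j
    simp only [Pi.inv_apply, smul_inv', ← mul_inv, hf g h j]

def mulCoboundaries₂ : Subgroup (G × G → M) where
  carrier := {f | IsMulCoboundary₂ f}
  one_mem' := ⟨1, fun g h => by simp⟩
  mul_mem' := by
    rintro f f' ⟨x, hx⟩ ⟨x', hx'⟩
    exact ⟨x * x', fun g h => by
      simp only [Pi.mul_apply, ← hx, ← hx', smul_mul', mul_div_mul_comm, mul_mul_mul_comm]⟩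
  inv_mem' := by
    rintro f ⟨x, hx⟩
    exact ⟨x⁻¹, fun g h => by
      simp only [Pi.inv_apply, ← hx, smul_inv', inv_div_inv, mul_inv, inv_div]⟩

theorem mem_mulCoboundaries₂ {f : G × G → M} : f ∈ mulCoboundaries₂ ↔ IsMulCoboundary₂ f :=
  Iff.rfl

section smul

variable {X : Type*} [Monoid X] [MulDistribMulAction X M] [SMulCommClass X G M] (c : X)

theorem IsMulCocycle₂.smul {f : G × G → M} (hf : IsMulCocycle₂ f) : IsMulCocycle₂ (c • f) := by
  intro g h j
  simp only [Pi.smul_apply]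
  rw [← smul_mul', hf g h j, smul_mul', smul_comm c g]

theorem IsMulCoboundary₂.smul {f : G × G → M} (hf : IsMulCoboundary₂ f) :
    IsMulCoboundary₂ (c • f) := by
  obtain ⟨x, hx⟩ := hf
  exact ⟨c • x, fun g h => by simp only [Pi.smul_apply, ← hx, smul_mul', smul_div', smul_comm c g]⟩

end smul

variable [Fintype G]

theorem IsMulCocycle₁.isMulCoboundary₁_pow_card {f : G → M} (hf : IsMulCocycle₁ f) :
    IsMulCoboundary₁ (f ^ Fintype.card G) := by
  refine ⟨(∏ h, f h)⁻¹, fun g => ?_⟩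
  have hprod : ∏ h, f h = (g • ∏ h, f h) * f g ^ Fintype.card G :=
    calc ∏ h, f h = ∏ h, f (g * h) := (Equiv.prod_comp (Equiv.mulLeft g) f).symm
      _ = (g • ∏ h, f h) * f g ^ Fintype.card G := by
        simp only [hf g, Finset.prod_mul_distrib, Finset.smul_prod', Finset.prod_const,
          Finset.card_univ]
  rw [Pi.pow_apply, smul_inv', inv_div_inv, eq_div_of_mul_eq'' hprod.symm]

theorem IsMulCocycle₂.isMulCoboundary₂_pow_card {f : G × G → M} (hf : IsMulCocycle₂ f) :
    IsMulCoboundary₂ (f ^ Fintype.card G) := by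
  refine ⟨fun g => ∏ j, f (g, j), fun g h => ?_⟩
  have hprod : (∏ j, f (g * h, j)) * f (g, h) ^ Fintype.card G
      = (g • ∏ j, f (h, j)) * ∏ j, f (g, j) :=
    calc (∏ j, f (g * h, j)) * f (g, h) ^ Fintype.card G
        = ∏ j, (f (g * h, j) * f (g, h)) := by
          rw [Finset.prod_mul_distrib, Finset.prod_const, Finset.card_univ]
      _ = (g • ∏ j, f (h, j)) * ∏ j, f (g, j) := by
        rw [Finset.prod_congr rfl fun j _ => hf g h j, Finset.prod_mul_distrib,
          ← Finset.smul_prod']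
        exact congrArg _ (Equiv.prod_comp (Equiv.mulLeft h) (fun j => f (g, j)))
  rw [Pi.pow_apply, div_mul_eq_mul_div, eq_div_of_mul_eq'' hprod]

theorem isFiniteRelIndex_mulCoboundaries₂ [Group.FG M] :
    (mulCoboundaries₂ (G := G) (M := M)).IsFiniteRelIndex mulCocycles₂ := by
  rw [Subgroup.isFiniteRelIndex_iff_finiteIndex]
  exact Subgroup.finiteIndex_comap_of_pow_mem (mulCocycles₂ (G := G) (M := M)).subtype
    (by rw [Subgroup.range_subtype]; exact Subgroup.fg_of_fg_commGroup _) _ Fintype.card_ne_zero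
    fun f => IsMulCocycle₂.isMulCoboundary₂_pow_card f.2

variable {X : Type*} [Group X] [MulDistribMulAction X M] [SMulCommClass X G M]

instance : MulAction.QuotientAction X (mulCoboundaries₂ : Subgroup (G × G → M)) :=
  .of_smul_mem fun u _ hf => IsMulCoboundary₂.smul u hf

theorem finiteIndex_stabilizer_mk [Group.FG M] {c : G × G → M} (hc : IsMulCocycle₂ c) :
    (MulAction.stabilizer X
      (c : (G × G → M) ⧸ (mulCoboundaries₂ : Subgroup (G × G → M)))).FiniteIndex := by
  let f := (QuotientGroup.mk' mulCoboundaries₂).comp (mulCocycles₂ : Subgroup (G × G → M)).subtype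
  have hker : f.ker = mulCoboundaries₂.subgroupOf mulCocycles₂ := by
    rw [← MonoidHom.comap_ker, QuotientGroup.ker_mk']
    rfl
  have : Finite (mulCocycles₂ ⧸ f.ker) := by
    rw [hker]
    have := isFiniteRelIndex_mulCoboundaries₂ (G := G) (M := M)
    infer_instance
  have : Finite f.range := .of_equiv _ (QuotientGroup.quotientKerEquivRange f).toEquiv
  have horbit : (MulAction.orbit X (c : (G × G → M) ⧸ mulCoboundaries₂)).Finite := by
    refine (Set.toFinite (f.range : Set _)).subset ?_
    rintro _ ⟨u, rfl⟩
    exact ⟨⟨u • c, hc.smul u⟩, rfl⟩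
  rw [Subgroup.finiteIndex_iff, MulAction.index_stabilizer]
  exact Set.ncard_ne_zero_of_mem (MulAction.mem_orbit_self _) horbit

end groupCohomology

open groupCohomology

namespace Subgroup

variable {Γ : Type*} [Group Γ] (A : Subgroup Γ)

theorem characteristic_of_centralizer_eq (htf : Monoid.IsTorsionFree Γ) [A.Normal]
    [A.FiniteIndex] (hmax : centralizer (A : Set Γ) = A) : A.Characteristic := by
  have hcomm : ∀ a ∈ A, ∀ b ∈ A, Commute a b := fun a ha b hb =>
    ((mem_centralizer_iff.mp (hmax.ge ha)) b hb).symm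
  refine characteristic_iff_map_le.mpr fun α => ?_
  rintro _ ⟨a, ha, rfl⟩
  refine hmax.le (mem_centralizer_iff.mpr fun b hb => (Commute.of_commute_pow_of_commute_conj htf
    A.index_ne_zero_of_finite ?_ ?_).eq.symm)
  · have hpow : α⁻¹ b ^ A.index ∈ A := A.pow_index_mem _
    simpa [MulAut.inv_apply] using (hcomm a ha _ hpow).map α.toMonoidHom
  · exact hcomm _ (Normal.conj_mem inferInstance b hb _) b hb

section Normal

variable [A.Normal]

theorem mk_coe_mul_out (a : A) (x : Γ ⧸ A) : ((a * x.out : Γ) : Γ ⧸ A) = x := by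
  rw [QuotientGroup.mk_mul, (QuotientGroup.eq_one_iff _).mpr a.2, one_mul, QuotientGroup.out_eq']

noncomputable def equivQuotientProd : Γ ≃ (Γ ⧸ A) × A where
  toFun g := (g, ⟨g * (g : Γ ⧸ A).out⁻¹, by rw [← QuotientGroup.eq_one_iff]; simp⟩)
  invFun p := p.2 * p.1.out
  left_inv g := by simp
  right_inv := fun ⟨x, a⟩ => Prod.ext (A.mk_coe_mul_out a x) <| Subtype.ext <| by
    change (a : Γ) * x.out * ((a * x.out : Γ) : Γ ⧸ A).out⁻¹ = a
    rw [mk_coe_mul_out]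
    group

/-- `a * x.out ↦ u a * b x * x.out` -/
noncomputable def twist (u : MulAut A) (b : Γ ⧸ A → A) : Equiv.Perm Γ :=
  (A.equivQuotientProd.trans (Equiv.prodShear (Equiv.refl _)
    fun x => u.toEquiv.trans (Equiv.mulRight (b x)))).trans A.equivQuotientProd.symm

theorem twist_coe_mul_out (u : MulAut A) (b : Γ ⧸ A → A) (a : A) (x : Γ ⧸ A) :
    A.twist u b (a * x.out) = ↑(u a * b x) * x.out := by
  rw [twist, Equiv.trans_apply, Equiv.trans_apply,
    show (a : Γ) * x.out = A.equivQuotientProd.symm (x, a) from rfl, Equiv.apply_symm_apply]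
  rfl

noncomputable def extensionCocycle : (Γ ⧸ A) × (Γ ⧸ A) → A := fun p =>
  ⟨p.1.out * p.2.out * (p.1 * p.2).out⁻¹, by rw [← QuotientGroup.eq_one_iff]; simp⟩

theorem coe_extensionCocycle (x y : Γ ⧸ A) :
    (A.extensionCocycle (x, y) : Γ) = x.out * y.out * (x * y).out⁻¹ := rfl

variable [IsMulCommutative A]

def holonomy : Γ ⧸ A →* MulAut A :=
  QuotientGroup.lift A MulAut.conjNormal fun a ha => by
    ext b
    simp [setLike_mul_comm ha b.2]

noncomputable instance : MulDistribMulAction (Γ ⧸ A) A :=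
  MulDistribMulAction.compHom A A.holonomy

theorem coe_mk_smul (g : Γ) (a : A) : (((g : Γ ⧸ A) • a : A) : Γ) = g * a * g⁻¹ := rfl

theorem coe_smul (x : Γ ⧸ A) (a : A) : ((x • a : A) : Γ) = x.out * a * x.out⁻¹ := by
  conv_lhs => rw [← QuotientGroup.out_eq' x]
  rfl

theorem holonomy_eq {φ : Γ ⧸ A →* MulAut A}
    (hφ : ∀ g : Γ, φ (QuotientGroup.mk g) = MulAut.conjNormal g) : φ = A.holonomy :=
  MonoidHom.ext fun x => QuotientGroup.induction_on x fun g => hφ g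

theorem isMulCocycle₂_extensionCocycle : IsMulCocycle₂ A.extensionCocycle := by
  intro x y z
  rw [mul_comm (A.extensionCocycle (x * y, z))]
  apply Subtype.ext
  simp only [coe_mul, coe_smul, coe_extensionCocycle, mul_assoc x y z]
  group

theorem coe_mul_out_mul_coe_mul_out (a a' : A) (x y : Γ ⧸ A) :
    (a * x.out : Γ) * (a' * y.out) = ↑(a * x • a' * A.extensionCocycle (x, y)) * (x * y).out := by
  simp only [coe_mul, coe_smul, coe_extensionCocycle]
  group

theorem twist_mul (u : MulAut A) (b : Γ ⧸ A → A) (hu : ∀ (x : Γ ⧸ A) (a : A), u (x • a) = x • u a)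
    (hb : ∀ x y, x • b y * b x * A.extensionCocycle (x, y)
      = u (A.extensionCocycle (x, y)) * b (x * y))
    (g h : Γ) : A.twist u b (g * h) = A.twist u b g * A.twist u b h := by
  obtain ⟨⟨x, a⟩, rfl⟩ := A.equivQuotientProd.symm.surjective g
  obtain ⟨⟨y, a'⟩, rfl⟩ := A.equivQuotientProd.symm.surjective h
  change A.twist u b (a * x.out * (a' * y.out))
    = A.twist u b (a * x.out) * A.twist u b (a' * y.out)
  rw [coe_mul_out_mul_coe_mul_out, twist_coe_mul_out, twist_coe_mul_out, twist_coe_mul_out,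
    coe_mul_out_mul_coe_mul_out]
  congr 2
  rw [map_mul, map_mul, hu, mul_assoc _ (u _), ← hb, smul_mul']
  ac_rfl

end Normal

section Characteristic

variable [A.Characteristic]

theorem apply_eq_of_mem_ker_characteristic {k : MulAut Γ}
    (hk : k ∈ (MulAut.characteristic A).ker) {a : Γ} (ha : a ∈ A) : k a = a := by
  simpa using congrArg (fun e : MulAut A => (e ⟨a, ha⟩ : Γ)) hk

theorem mul_inv_mem_of_mem_ker_characteristic (hmax : centralizer (A : Set Γ) ≤ A)
    {k : MulAut Γ} (hk : k ∈ (MulAut.characteristic A).ker) (g : Γ) : k g * g⁻¹ ∈ A := by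
  have hc : g⁻¹ * k g ∈ centralizer (A : Set Γ) := mem_centralizer_iff.mpr fun a ha => by
    have h1 := A.apply_eq_of_mem_ker_characteristic hk (Normal.conj_mem inferInstance a ha g)
    rw [map_mul, map_mul, map_inv, A.apply_eq_of_mem_ker_characteristic hk ha] at h1
    calc a * (g⁻¹ * k g) = g⁻¹ * (g * a * g⁻¹) * k g := by group
      _ = g⁻¹ * k g * a := by rw [← h1]; group
  simpa [mul_assoc] using Normal.conj_mem inferInstance _ (hmax hc) g

variable [IsMulCommutative A]

theorem characteristic_comp_conj :
    (MulAut.characteristic A).comp MulAut.conj = A.holonomy.comp (QuotientGroup.mk' A) := by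
  ext g a
  rfl

theorem range_holonomy_eq_map :
    A.holonomy.range = (MulAut.conj : Γ →* MulAut Γ).range.map (MulAut.characteristic A) := by
  rw [← MonoidHom.range_comp, characteristic_comp_conj, MonoidHom.range_comp,
    (QuotientGroup.mk' A).range_eq_top_of_surjective (QuotientGroup.mk'_surjective A),
    ← MonoidHom.range_eq_map]

theorem range_characteristic_le_normalizer :
    (MulAut.characteristic A).range ≤ normalizer (A.holonomy.range : Set (MulAut A)) := by
  have := MulAut.normal_range_conj (G := Γ)
  rw [range_holonomy_eq_map, MonoidHom.range_eq_map,
    ← normalizer_eq_top (H := (MulAut.conj : Γ →* MulAut Γ).range)]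
  exact le_normalizer_map _

noncomputable def cocycleHom (hmax : centralizer (A : Set Γ) ≤ A) :
    (MulAut.characteristic A).ker →* (Γ ⧸ A → A) where
  toFun k x := ⟨(k : MulAut Γ) x.out * x.out⁻¹,
    A.mul_inv_mem_of_mem_ker_characteristic hmax k.2 _⟩
  map_one' := by ext; simp
  map_mul' k l := by
    funext x
    apply Subtype.ext
    set g := x.out
    have hl := A.mul_inv_mem_of_mem_ker_characteristic hmax l.2 g
    calc (k : MulAut Γ) ((l : MulAut Γ) g) * g⁻¹
        = (k : MulAut Γ) ((l : MulAut Γ) g * g⁻¹ * g) * g⁻¹ := by group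
      _ = ((l : MulAut Γ) g * g⁻¹) * ((k : MulAut Γ) g * g⁻¹) := by
          rw [map_mul, A.apply_eq_of_mem_ker_characteristic k.2 hl]; group
      _ = ((k : MulAut Γ) g * g⁻¹) * ((l : MulAut Γ) g * g⁻¹) :=
          setLike_mul_comm hl (A.mul_inv_mem_of_mem_ker_characteristic hmax k.2 _)

section CocycleHom

variable (hmax : centralizer (A : Set Γ) ≤ A) (k : (MulAut.characteristic A).ker)

theorem coe_cocycleHom_mk (g : Γ) :
    (A.cocycleHom hmax k (g : Γ ⧸ A) : Γ) = (k : MulAut Γ) g * g⁻¹ := by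
  obtain ⟨a, ha⟩ := QuotientGroup.mk_out_eq_mul A g
  change (k : MulAut Γ) (g : Γ ⧸ A).out * (g : Γ ⧸ A).out⁻¹ = _
  rw [ha, map_mul, A.apply_eq_of_mem_ker_characteristic k.2 a.2]
  group

theorem isMulCocycle₁_cocycleHom : IsMulCocycle₁ (A.cocycleHom hmax k) := by
  intro x y
  induction x using QuotientGroup.induction_on with | H g =>
  induction y using QuotientGroup.induction_on with | H h =>
  rw [mul_comm]
  apply Subtype.ext
  simp only [← QuotientGroup.mk_mul, coe_mul, coe_cocycleHom_mk, coe_mk_smul, map_mul]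
  group

theorem mem_range_conj_of_isMulCoboundary₁ (h : IsMulCoboundary₁ (A.cocycleHom hmax k)) :
    (k : MulAut Γ) ∈ (MulAut.conj : Γ →* MulAut Γ).range := by
  obtain ⟨a, ha⟩ := h
  refine ⟨(a : Γ)⁻¹, MulEquiv.ext fun g => ?_⟩
  have h1 := congrArg Subtype.val (ha g)
  rw [coe_div, div_eq_mul_inv, coe_mk_smul, coe_cocycleHom_mk] at h1
  have hc : g * a * g⁻¹ * (a : Γ)⁻¹ = (a : Γ)⁻¹ * (g * a * g⁻¹) :=
    setLike_mul_comm (Normal.conj_mem inferInstance _ a.2 g) (inv_mem a.2)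
  calc (MulAut.conj (a : Γ)⁻¹) g = (a : Γ)⁻¹ * (g * a * g⁻¹) * g := by simp [mul_assoc]
    _ = (k : MulAut Γ) g := by rw [← hc, h1]; group

end CocycleHom

theorem mem_range_characteristic_of_isMulCoboundary₂ (u : MulAut A)
    (hu : ∀ (x : Γ ⧸ A) (a : A), u (x • a) = x • u a)
    (hc : IsMulCoboundary₂ fun p => u (A.extensionCocycle p) / A.extensionCocycle p) :
    u ∈ (MulAut.characteristic A).range := by
  obtain ⟨b, hb⟩ := hc
  have hb' : ∀ x y, x • b y * b x * A.extensionCocycle (x, y)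
      = u (A.extensionCocycle (x, y)) * b (x * y) := fun x y => by
    have := hb x y
    rwa [div_mul_eq_mul_div, div_eq_div_iff_mul_eq_mul] at this
  let β : MulAut Γ := { A.twist u b with map_mul' := A.twist_mul u b hu hb' }
  refine ⟨β, MulEquiv.ext fun a => Subtype.ext ?_⟩
  -- `(1 : Γ ⧸ A).out` need not be `1`, so `β a` is read off from `β (a * (1 : Γ ⧸ A).out)`.
  have h1 : β (a * (1 : Γ ⧸ A).out) = ↑(u a * b 1) * (1 : Γ ⧸ A).out :=
    A.twist_coe_mul_out u b a 1
  have h2 : β (1 : Γ ⧸ A).out = ↑(b 1) * (1 : Γ ⧸ A).out := by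
    have := A.twist_coe_mul_out u b 1 1
    rw [coe_one, one_mul, map_one, one_mul] at this
    exact this
  rw [map_mul, h2, coe_mul, mul_assoc] at h1
  exact mul_right_cancel h1

variable [Finite (Γ ⧸ A)] [Group.FG A]

theorem isFiniteRelIndex_range_conj_ker (hmax : centralizer (A : Set Γ) ≤ A) :
    (MulAut.conj : Γ →* MulAut Γ).range.IsFiniteRelIndex (MulAut.characteristic A).ker := by
  have := Fintype.ofFinite (Γ ⧸ A)
  have := finiteIndex_comap_of_pow_mem (A.cocycleHom hmax) (fg_of_fg_commGroup _)
    mulCoboundaries₁ Fintype.card_ne_zero fun k =>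
      (A.isMulCocycle₁_cocycleHom hmax k).isMulCoboundary₁_pow_card
  rw [isFiniteRelIndex_iff_finiteIndex]
  exact finiteIndex_of_le (H := mulCoboundaries₁.comap (A.cocycleHom hmax))
    fun k hk => A.mem_range_conj_of_isMulCoboundary₁ hmax k hk

theorem finiteIndex_range_conj_of_finite_normalizer (hmax : centralizer (A : Set Γ) ≤ A)
    [Finite (normalizer (A.holonomy.range : Set (MulAut A)))] :
    (MulAut.conj : Γ →* MulAut Γ).range.FiniteIndex := by
  have : Finite (MulAut.characteristic A).range :=
    Finite.of_injective _ (inclusion_injective A.range_characteristic_le_normalizer)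
  have := A.isFiniteRelIndex_range_conj_ker hmax
  exact finiteIndex_of_isFiniteRelIndex _ (MulAut.characteristic A).ker

theorem finite_centralizer_of_finite_range_characteristic
    [Finite (MulAut.characteristic A).range] :
    Finite (centralizer (A.holonomy.range : Set (MulAut A))) := by
  have := Fintype.ofFinite (Γ ⧸ A)
  set C := centralizer (A.holonomy.range : Set (MulAut A))
  have hcomm (u : C) (x : Γ ⧸ A) (a : A) : (u : MulAut A) (x • a) = x • (u : MulAut A) a :=
    (DFunLike.congr_fun (mem_centralizer_iff.mp u.2 (A.holonomy x) ⟨x, rfl⟩) a).symm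
  have : SMulCommClass C (Γ ⧸ A) A := ⟨fun u x a => hcomm u x a⟩
  let q : ((Γ ⧸ A) × (Γ ⧸ A) → A) ⧸ (mulCoboundaries₂ : Subgroup ((Γ ⧸ A) × (Γ ⧸ A) → A)) :=
    A.extensionCocycle
  have : (MulAction.stabilizer C q).FiniteIndex :=
    finiteIndex_stabilizer_mk A.isMulCocycle₂_extensionCocycle
  have hlift (u : C) (hu : u ∈ MulAction.stabilizer C q) :
      (u : MulAut A) ∈ (MulAut.characteristic A).range := by
    refine A.mem_range_characteristic_of_isMulCoboundary₂ u (hcomm u) ?_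
    rw [← mem_mulCoboundaries₂]
    convert inv_mem (QuotientGroup.eq.mp hu) using 1
    funext p
    simp [Subgroup.smul_def, MulAut.smul_def, div_eq_inv_mul]
  have : Finite (MulAction.stabilizer C q) :=
    Finite.of_injective (fun u => (⟨u.1.1, hlift u.1 u.2⟩ : (MulAut.characteristic A).range))
      fun u v h => Subtype.ext (Subtype.ext (congrArg Subtype.val h :))
  exact (finite_iff_finite_and_finiteIndex (MulAction.stabilizer C q)).mpr ⟨this, inferInstance⟩

theorem finite_normalizer_of_finiteIndex_range_conj
    [(MulAut.conj : Γ →* MulAut Γ).range.FiniteIndex] :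
    Finite (normalizer (A.holonomy.range : Set (MulAut A))) := by
  have : Finite A.holonomy.range := .of_surjective _ A.holonomy.rangeRestrict_surjective
  have : Finite ((MulAut.conj : Γ →* MulAut Γ).range.map (MulAut.characteristic A)) := by
    rwa [← range_holonomy_eq_map]
  have := (MulAut.characteristic A).finite_range_of_finite_map (MulAut.conj : Γ →* MulAut Γ).range
  have := A.finite_centralizer_of_finite_range_characteristic
  exact finite_normalizer_of_finite_centralizer _

end Characteristic

end Subgroup

/-- **Theorem 1 (i) ⟺ (ii).** Let `Γ` be a Bieberbach group of dimension `n`: a torsion-free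
group with a normal subgroup `A` that is free abelian of rank `n`, of finite index, and
maximal abelian (equal to its own centralizer).  Let `φ : Γ/A → Aut(A)` be the holonomy
representation (the map induced by conjugation).  Then the outer automorphism group
`Out(Γ) = Aut(Γ)/Inn(Γ)` is finite if and only if the normalizer of the image `φ(Γ/A)` in
`Aut(A)` is finite. -/
theorem out_finite_iff_normalizer_finite {Γ : Type*} [Group Γ] (n : ℕ)
    (htf : Monoid.IsTorsionFree Γ) (A : Subgroup Γ) [hN : A.Normal]
    (hfree : Nonempty (A ≃* Multiplicative (Fin n → ℤ)))
    (hfi : A.FiniteIndex)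
    (hmax : Subgroup.centralizer (A : Set Γ) = A)
    (φ : Γ ⧸ A →* MulAut A)
    (hφ : ∀ g : Γ, φ (QuotientGroup.mk g) = MulAut.conjNormal g) :
    Finite (MulAut Γ ⧸ (MulAut.conj : Γ →* MulAut Γ).range) ↔
      Finite (Subgroup.normalizer (φ.range : Set (MulAut A))) := by
  have : IsMulCommutative A := Subgroup.le_centralizer_iff_isMulCommutative.mp hmax.ge
  have : A.Characteristic := A.characteristic_of_centralizer_eq htf hmax
  obtain rfl := A.holonomy_eq hφ
  obtain ⟨e⟩ := hfree
  have : Group.FG A := Group.fg_of_surjective (f := e.symm.toMonoidHom) e.symm.surjective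
  rw [← Subgroup.finiteIndex_iff_finite_quotient]
  exact ⟨fun _ => A.finite_normalizer_of_finiteIndex_range_conj,
    fun _ => A.finiteIndex_range_conj_of_finite_normalizer hmax.le⟩
end

section
/- Let n ≥ 2 and let Γ be a Bieberbach group of dimension n whose center is nontrivial. Then there exists a surjective group homomorphism p: Γ → ℤ whose kernel Γ' is a Bieberbach group of dimension n − 1; that is, Γ' is torsion-free and contains a normal subgroup that is free abelian of rank n − 1, of finite index in Γ', and maximal abelian in Γ' (equal to its own centralizer in Γ'). -/
/-- A group `G` is a *Bieberbach group of dimension `n`* if it is torsion free and has a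
normal subgroup `A` that is free abelian of rank `n`, of finite index, and maximal abelian
in `G` (equal to its own centralizer). -/
def IsBieberbach (n : ℕ) (G : Type*) [Group G] : Prop :=
  (∀ g : G, g ≠ 1 → ¬IsOfFinOrder g) ∧
    ∃ A : Subgroup G, A.Normal ∧ Nonempty (A ≃* Multiplicative (Fin n → ℤ)) ∧
      A.FiniteIndex ∧ Subgroup.centralizer (A : Set G) = A

/-!
A nontrivial central element `z` of `Γ` lies in the lattice `A`, since the center centralizes `A`.
Composing a coordinate of `A ≅ ℤⁿ` that does not vanish at `z` with the transfer `Γ → A` gives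
a homomorphism `Γ → ℤ` sending `z` to `[Γ : A]` times a nonzero integer; rescaling it onto its
image gives a surjection `p : Γ → ℤ`. Its kernel `Γ'` is torsion free, and `A ∩ Γ'` is the kernel
of a nonzero functional on `A`, hence a lattice of rank `n - 1` and of finite index in `Γ'`.
Finally, if `γ ∈ Γ'` centralizes `A ∩ Γ'`, then for `a ∈ A` a suitable power `a ^ m` differs
from an element of `A ∩ Γ'` by a power of `z`, so `γ` commutes with `a ^ m`; as `A` is abelian
and `Γ` torsion free, `γ` commutes with `a`, so `γ ∈ A`.
-/

open Subgroup Module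

theorem MonoidHom.exists_surjective_ker_eq {G : Type*} [Group G] (f : G →* Multiplicative ℤ)
    (hf : f ≠ 1) : ∃ p : G →* Multiplicative ℤ, Function.Surjective p ∧ p.ker = f.ker := by
  obtain ⟨g, hg⟩ := DFunLike.ne_iff.mp hf
  have : Infinite f.range := Set.infinite_coe_iff.mpr <|
    (infinite_zpowers.mpr (not_isOfFinOrder_of_isMulTorsionFree hg)).mono <|
      zpowers_le.mpr (f.mem_range.mpr ⟨g, rfl⟩)
  let e : f.range ≃* Multiplicative ℤ := intCyclicMulEquiv.symm
  refine ⟨(e : f.range →* Multiplicative ℤ).comp f.rangeRestrict,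
    e.surjective.comp f.rangeRestrict_surjective, ?_⟩
  rw [ker_mulEquiv_comp, ker_rangeRestrict]

theorem LinearMap.finrank_ker_of_ne_zero {R M : Type*} [CommRing R] [IsDomain R]
    [AddCommGroup M] [Module R M] [Module.Finite R M] (f : M →ₗ[R] R) (hf : f ≠ 0) :
    finrank R (LinearMap.ker f) = finrank R M - 1 := by
  have hrange : finrank R (LinearMap.range f) = 1 := by
    refine le_antisymm (by simpa using Submodule.finrank_le (LinearMap.range f)) ?_
    rw [Nat.one_le_iff_ne_zero, Ne, Submodule.finrank_eq_zero, LinearMap.range_eq_bot]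
    exact hf
  have := (LinearMap.ker f).finrank_quotient_add_finrank
  rw [f.quotKerEquivRange.finrank_eq, hrange] at this
  omega

theorem MonoidHom.nonempty_ker_mulEquiv {A : Type*} [Group A] {n : ℕ}
    (e : A ≃* Multiplicative (Fin n → ℤ)) (φ : A →* Multiplicative ℤ) (hφ : φ ≠ 1) :
    Nonempty (φ.ker ≃* Multiplicative (Fin (n - 1) → ℤ)) := by
  let f : (Fin n → ℤ) →ₗ[ℤ] ℤ := (φ.comp e.symm.toMonoidHom).toAdditive.toIntLinearMap
  have mem_ker_f (v) : v ∈ LinearMap.ker f ↔ φ (e.symm (.ofAdd v)) = 1 := Iff.rfl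
  have hf : f ≠ 0 := by
    obtain ⟨a, ha⟩ := DFunLike.ne_iff.mp hφ
    intro hf0
    exact ha (by simpa using (mem_ker_f (e a).toAdd).mp (by simp [hf0]))
  let b := Module.finBasisOfFinrankEq ℤ _ (by rw [f.finrank_ker_of_ne_zero hf, finrank_fin_fun])
  let g : φ.ker ≃* Multiplicative (LinearMap.ker f) :=
    { toFun x := .ofAdd ⟨(e x).toAdd, (mem_ker_f _).mpr (by simpa using φ.mem_ker.mp x.2)⟩
      invFun v := ⟨e.symm (.ofAdd v.toAdd), (mem_ker_f _).mp v.toAdd.2⟩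
      left_inv x := by simp
      right_inv v := by simp
      map_mul' x y := by simp only [coe_mul, map_mul, toAdd_mul]; rfl }
  exact ⟨g.trans (AddEquiv.toMultiplicative b.equivFun.toAddEquiv)⟩

theorem exists_monoidHom_int_ne_one {A : Type*} [Group A] {n : ℕ}
    (e : A ≃* Multiplicative (Fin n → ℤ)) {a : A} (ha : a ≠ 1) :
    ∃ q : A →* Multiplicative ℤ, q a ≠ 1 := by
  obtain ⟨i, hi⟩ : ∃ i, (e a).toAdd i ≠ 0 := by
    by_contra! h
    exact ha (e.map_eq_one_iff.mp (funext h))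
  exact ⟨(AddMonoidHom.toMultiplicative (Pi.evalAddMonoidHom _ i)).comp e.toMonoidHom, hi⟩

theorem MonoidHom.transfer_ne_one_of_mem_center {G B : Type*} [Group G] [CommGroup B]
    [IsMulTorsionFree B] {H : Subgroup G} [H.FiniteIndex] (q : H →* B) {z : G}
    (hz : z ∈ center G) (hzH : z ∈ H) (hqz : q ⟨z, hzH⟩ ≠ 1) : q.transfer z ≠ 1 := by
  have hcomm (k : ℕ) (g : G) : g⁻¹ * z ^ k * g = z ^ k := by
    rw [mem_center_iff.mp (pow_mem hz k) g⁻¹, inv_mul_cancel_right]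
  rw [transfer_eq_pow q z fun k g _ => hcomm k g]
  have : (⟨z ^ H.index, _⟩ : H) = ⟨z, hzH⟩ ^ H.index := rfl
  rw [this, map_pow]
  exact (pow_eq_one_iff_left FiniteIndex.index_ne_zero).not.mpr hqz

theorem centralizer_inf_ker_le_centralizer {Γ : Type*} [Group Γ]
    (htf : ∀ g : Γ, g ≠ 1 → ¬IsOfFinOrder g) {A : Subgroup Γ} (hA : A.Normal)
    (hAcomm : A ≤ centralizer (A : Set Γ)) (f : Γ →* Multiplicative ℤ) {z : Γ}
    (hz : z ∈ center Γ) (hzA : z ∈ A) (hfz : f z ≠ 1) :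
    centralizer ((A ⊓ f.ker : Subgroup Γ) : Set Γ) ≤ centralizer (A : Set Γ) := by
  intro γ hγ
  rw [mem_centralizer_iff] at hγ ⊢
  intro a ha
  set m := (f z).toAdd
  set k := (f a).toAdd
  have hw : a ^ m * z ^ (-k) ∈ A ⊓ f.ker := by
    refine ⟨mul_mem (zpow_mem ha _) (zpow_mem hzA _), ?_⟩
    apply Multiplicative.toAdd.injective
    simp [m, k, mul_comm]
  have ham : Commute (a ^ m) γ := by
    have hzk : Commute (z ^ k) γ := (mem_center_iff.mp (zpow_mem hz k) γ).symm
    simpa using (show Commute _ γ from hγ _ hw).mul_left hzk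
  have hcomm : Commute (γ * a * γ⁻¹) a⁻¹ :=
    (show Commute _ a from hAcomm ha _ (hA.conj_mem a ha γ)).inv_right
  have hpow : (γ * a * γ⁻¹ * a⁻¹) ^ m = 1 := by
    rw [hcomm.mul_zpow, conj_zpow, ham.symm.mul_inv_cancel, inv_zpow, mul_inv_cancel]
  have hconj : γ * a * γ⁻¹ * a⁻¹ = 1 := by
    by_contra h
    exact htf _ h (isOfFinOrder_iff_zpow_eq_one.mpr ⟨m, hfz, hpow⟩)
  rw [mul_inv_eq_one, mul_inv_eq_iff_eq_mul] at hconj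
  exact hconj.symm

namespace Subgroup

variable {G : Type*} [Group G]

def subgroupOfComm (H K : Subgroup G) : H.subgroupOf K ≃* K.subgroupOf H where
  toFun x := ⟨⟨x, x.2⟩, x.1.2⟩
  invFun x := ⟨⟨x, x.2⟩, x.1.2⟩
  left_inv _ := rfl
  right_inv _ := rfl
  map_mul' _ _ := rfl

theorem centralizer_subgroupOf (H K : Subgroup G) :
    centralizer (H.subgroupOf K : Set K) =
      (centralizer ((H ⊓ K : Subgroup G) : Set G)).subgroupOf K := by
  ext γ
  simp only [mem_subgroupOf, mem_centralizer_iff, SetLike.mem_coe, mem_inf, Subtype.forall,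
    Subtype.ext_iff, coe_mul]
  exact ⟨fun h a ha => h a ha.2 ha.1, fun h a hK hH => h a ⟨hH, hK⟩⟩

end Subgroup

theorem IsBieberbach.exists_apply_ne_one_of_mem_center {Γ : Type*} [Group Γ] {n : ℕ}
    (hB : IsBieberbach n Γ) {z : Γ} (hz : z ∈ center Γ) (hz1 : z ≠ 1) :
    ∃ f : Γ →* Multiplicative ℤ, f z ≠ 1 := by
  obtain ⟨-, A, -, ⟨e⟩, hAfin, hcent⟩ := hB
  have hzA : z ∈ A := hcent ▸ center_le_centralizer _ hz
  obtain ⟨q, hq⟩ := exists_monoidHom_int_ne_one e (a := ⟨z, hzA⟩) (by simpa using hz1)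
  exact ⟨q.transfer, q.transfer_ne_one_of_mem_center hz hzA hq⟩

theorem IsBieberbach.ker {Γ : Type*} [Group Γ] {n : ℕ} (hB : IsBieberbach n Γ)
    (p : Γ →* Multiplicative ℤ) {z : Γ} (hz : z ∈ center Γ) (hpz : p z ≠ 1) :
    IsBieberbach (n - 1) p.ker := by
  obtain ⟨htf, A, hA, ⟨e⟩, hAfin, hcent⟩ := hB
  have hzA : z ∈ A := hcent ▸ center_le_centralizer _ hz
  have hpA : p.domRestrict A ≠ 1 := DFunLike.ne_iff.mpr ⟨⟨z, hzA⟩, hpz⟩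
  obtain ⟨E⟩ := (p.domRestrict A).nonempty_ker_mulEquiv e hpA
  refine ⟨fun g hg hfin => htf g (by simpa using hg) (Submonoid.isOfFinOrder_coe.mpr hfin),
    A.subgroupOf p.ker, hA.subgroupOf _, ⟨(subgroupOfComm _ _).trans E⟩, inferInstance, ?_⟩
  rw [centralizer_subgroupOf]
  refine le_antisymm (subgroupOf_mono _ ?_) (subgroupOf_mono _ ?_)
  · exact (centralizer_inf_ker_le_centralizer htf hA hcent.ge p hz hzA hpz).trans hcent.le
  · exact hcent.ge.trans (centralizer_le inf_le_left)

theorem calabi_step_general {Γ : Type*} [Group Γ] (n : ℕ)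
    (hB : IsBieberbach n Γ) (hcenter : Subgroup.center Γ ≠ ⊥) :
    ∃ p : Γ →* Multiplicative ℤ, Function.Surjective p ∧ IsBieberbach (n - 1) p.ker := by
  obtain ⟨⟨z, hz⟩, hz1⟩ := Subgroup.ne_bot_iff_exists_ne_one.mp hcenter
  obtain ⟨f, hfz⟩ := hB.exists_apply_ne_one_of_mem_center hz (by simpa using hz1)
  obtain ⟨p, hp, hker⟩ := f.exists_surjective_ker_eq (DFunLike.ne_iff.mpr ⟨z, hfz⟩)
  have hpz : p z ≠ 1 := by rwa [Ne, ← MonoidHom.mem_ker, hker, MonoidHom.mem_ker]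
  exact ⟨p, hp, hB.ker p hz hpz⟩

/-- **Calabi's inductive step.**  Let `n ≥ 2` and let `Γ` be a Bieberbach group of dimension
`n` with nontrivial center.  Then there is a surjective homomorphism `p : Γ → ℤ` whose
kernel is a Bieberbach group of dimension `n - 1`; i.e. `Γ` is an extension
`0 → Γ' → Γ → ℤ → 0` of a Bieberbach group `Γ'` of dimension `n - 1` by `ℤ`. -/
theorem calabi_step {Γ : Type*} [Group Γ] (n : ℕ) (hn : 2 ≤ n)
    (hB : IsBieberbach n Γ) (hcenter : Subgroup.center Γ ≠ ⊥) :
    ∃ p : Γ →* Multiplicative ℤ, Function.Surjective p ∧ IsBieberbach (n - 1) p.ker :=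
  calabi_step_general n hB hcenter
end

section
/- For every finite group G there exist a natural number n and a Bieberbach group Γ of dimension n whose holonomy group Γ/A is isomorphic to G; that is, there exist a torsion-free group Γ and a normal subgroup A of Γ such that A is free abelian of rank n, A has finite index in Γ, A is maximal abelian in Γ (equal to its own centralizer), and Γ/A ≅ G. -/
/-!
Let `H` act on a finite set `X` and let `σ : H → (X → ℝ/ℤ)` be a cocycle. The affine maps
`v ↦ P_g v + t` of `ℝ^X` whose translation part satisfies `t ≡ σ g (mod ℤ^X)` form a group `Γ`,
an extension of `H` by the lattice `ℤ^X`. The lattice is maximal abelian in `Γ` as soon as `H`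
acts faithfully on `X`, and `Γ` is torsion-free as soon as every `g ≠ 1` fixes some `x` with
`σ g x ≠ 0`: a power `γⁿ` of `γ = (t, g)` has translation part `n • t` at `x`.

Both conditions hold for `X = Σ s, H ⧸ ⟨s⟩`, with `σ` induced, block by block, from an injective
character `⟨s⟩ → ℝ/ℤ`: the block of `s = 1` is the regular representation, and `g` fixes the
coset `⟨g⟩` in its own block, where the induced cocycle takes the value `-χ(g) ≠ 0`.
-/
/-- A *Bieberbach group of dimension `n`*: a torsion-free group `carrier` together with a
normal subgroup `A` that is free abelian of rank `n`, of finite index, and maximal abelian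
(equal to its own centralizer).  The quotient `carrier ⧸ A` is the holonomy group. -/
structure BieberbachGroup (n : ℕ) where
  carrier : Type
  [grp : Group carrier]
  torsionFree : ∀ g : carrier, g ≠ 1 → ¬IsOfFinOrder g
  A : @Subgroup carrier grp
  normal : A.Normal
  freeAbelianRank : Nonempty (A ≃* Multiplicative (Fin n → ℤ))
  finiteIndex : A.FiniteIndex
  maxAbelian : Subgroup.centralizer (A : Set carrier) = A

attribute [instance] BieberbachGroup.grp BieberbachGroup.normal

open Function SemidirectProduct Multiplicative

theorem mulAutArrow_apply_apply' {G A M : Type*} [Group G] [MulAction G A] [Monoid M]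
    (g : G) (f : A → M) (a : A) : mulAutArrow g f a = f (g⁻¹ • a) := rfl

section PermAffine

variable {H X : Type*} [Group H] [MulAction H X]

/-- `(t, g)` is the affine map `v ↦ P_g v + t` of `ℝ^X`, with `(P_g v) x = v (g⁻¹ • x)`; the
translation part is written multiplicatively, in `X → Multiplicative ℝ`. -/
abbrev PermAffine (H X : Type*) [Group H] [MulAction H X] : Type _ :=
  (X → Multiplicative ℝ) ⋊[mulAutArrow] H

theorem PermAffine.pow_left_apply_of_smul_eq {w : PermAffine H X} {x : X} (hx : w.right • x = x)
    (n : ℕ) : (w ^ n).left x = w.left x ^ n := by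
  induction n with
  | zero => rfl
  | succ n ih =>
    have hfix : (w ^ n).right⁻¹ • x = x := by
      rw [← rightHom_eq_right, map_pow, rightHom_eq_right, ← MulAction.mem_stabilizer_iff]
      exact inv_mem (pow_mem hx n)
    simp only [pow_succ, mul_left, Pi.mul_apply, mulAutArrow_apply_apply', hfix, ih]

def IsPermCocycle {M : Type*} [AddCommGroup M] (σ : H → X → M) : Prop :=
  ∀ g h x, σ (g * h) x = σ g x + σ h (g⁻¹ • x)

namespace IsPermCocycle

variable {M : Type*} [AddCommGroup M] {σ : H → X → M} (hσ : IsPermCocycle σ)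
include hσ

theorem map_one (x : X) : σ 1 x = 0 := by
  simpa using hσ 1 1 x

theorem map_inv (g : H) (x : X) : σ g⁻¹ x = -σ g (g • x) := by
  have := hσ g g⁻¹ (g • x)
  rw [mul_inv_cancel, hσ.map_one, inv_smul_smul] at this
  exact eq_neg_of_add_eq_zero_right this.symm

end IsPermCocycle

theorem IsPermCocycle.sigma {ι : Type*} {X : ι → Type*} [∀ i, MulAction H (X i)] {M : Type*}
    [AddCommGroup M] {σ : ∀ i, H → X i → M} (hσ : ∀ i, IsPermCocycle (σ i)) :
    IsPermCocycle fun g (x : Σ i, X i) => σ x.1 g x.2 :=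
  fun g h x => hσ x.1 g h x.2

variable {σ : H → X → UnitAddCircle}

def cocycleExtension (hσ : IsPermCocycle σ) : Subgroup (PermAffine H X) where
  carrier := {w | ∀ x, ((toAdd (w.left x) : ℝ) : UnitAddCircle) = σ w.right x}
  one_mem' x := by simp [hσ.map_one]
  mul_mem' {a b} ha hb x := by
    simp only [mul_left, mul_right, Pi.mul_apply, mulAutArrow_apply_apply', toAdd_mul,
      AddCircle.coe_add, ha x, hb (a.right⁻¹ • x), hσ a.right b.right x]
  inv_mem' {a} ha x := by
    simp only [inv_left, inv_right, mulAutArrow_apply_apply', inv_inv, Pi.inv_apply, toAdd_inv,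
      AddCircle.coe_neg, ha (a.right • x), hσ.map_inv]

namespace cocycleExtension

variable (hσ : IsPermCocycle σ)

def holonomy : cocycleExtension hσ →* H := rightHom.comp (cocycleExtension hσ).subtype

theorem holonomy_surjective : Surjective (holonomy hσ) := by
  intro g
  choose v hv using fun x => QuotientAddGroup.mk_surjective (σ g x)
  exact ⟨⟨⟨fun x => ofAdd (v x), g⟩, fun x => by simp [hv]⟩, rfl⟩

theorem mem_ker_holonomy {γ : cocycleExtension hσ} : γ ∈ (holonomy hσ).ker ↔ γ.1.right = 1 :=
  MonoidHom.mem_ker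

def latticeTranslation : Multiplicative (X → ℤ) →* cocycleExtension hσ where
  toFun a := ⟨inl fun x => ofAdd (a.toAdd x : ℝ), fun x => by simp [hσ.map_one]⟩
  map_one' := by ext <;> simp
  map_mul' a b := by ext <;> simp

theorem latticeTranslation_injective : Injective (latticeTranslation hσ) := by
  intro a b hab
  ext x
  simpa [latticeTranslation] using congr_fun (congrArg (·.1.left) hab) x

theorem range_latticeTranslation : (latticeTranslation hσ).range = (holonomy hσ).ker := by
  ext γ
  rw [mem_ker_holonomy]
  constructor
  · rintro ⟨a, rfl⟩
    rfl
  · intro hγ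
    have hint (x : X) : ∃ n : ℤ, (n : ℝ) = toAdd (γ.1.left x) := by
      have := γ.2 x
      rw [hγ, hσ.map_one] at this
      simpa using (AddCircle.coe_eq_zero_iff 1).1 this
    choose n hn using hint
    refine ⟨ofAdd n, ?_⟩
    ext x
    · simp [latticeTranslation, hn]
    · exact hγ.symm

noncomputable def kerHolonomyEquiv : (holonomy hσ).ker ≃* Multiplicative (X → ℤ) :=
  ((MonoidHom.ofInjective (latticeTranslation_injective hσ)).trans
    (MulEquiv.subgroupCongr (range_latticeTranslation hσ))).symm

theorem centralizer_ker_holonomy [FaithfulSMul H X] :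
    Subgroup.centralizer ((holonomy hσ).ker : Set (cocycleExtension hσ)) = (holonomy hσ).ker := by
  classical
  refine le_antisymm (fun γ hγ => ?_) ?_
  · rw [mem_ker_holonomy]
    by_contra hg
    obtain ⟨x, hx⟩ : ∃ x : X, γ.1.right • x ≠ x := by
      by_contra! h
      exact hg (eq_of_smul_eq_smul fun x => by rw [h, one_smul])
    -- `γ` moves the unit translation `e_x` to `e_{g • x} ≠ e_x`
    set e := latticeTranslation hσ (ofAdd (Pi.single x 1))
    have hcomm := congr_fun (congrArg (·.1.left) (hγ e ((mem_ker_holonomy hσ).2 rfl)))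
      (γ.1.right • x)
    simp [-mulAutArrow_apply_apply, mulAutArrow_apply_apply', e, latticeTranslation, mul_left,
      Pi.single_apply, hx] at hcomm
  · intro δ hδ γ hγ
    simp only [SetLike.mem_coe, mem_ker_holonomy] at hγ hδ
    ext1
    ext <;> simp [mul_left, hγ, hδ, mul_comm]

theorem left_apply_eq_one_of_isOfFinOrder {γ : cocycleExtension hσ} (hγ : IsOfFinOrder γ) {x : X}
    (hx : γ.1.right • x = x) : γ.1.left x = 1 := by
  obtain ⟨n, hn, hpow⟩ := isOfFinOrder_iff_pow_eq_one.1 hγ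
  have := PermAffine.pow_left_apply_of_smul_eq hx n
  rw [← Subgroup.coe_pow, hpow] at this
  exact (pow_eq_one_iff_left hn.ne').1 this.symm

theorem isOfFinOrder_iff_eq_one (hfix : ∀ g : H, g ≠ 1 → ∃ x : X, g • x = x ∧ σ g x ≠ 0)
    {γ : cocycleExtension hσ} : IsOfFinOrder γ ↔ γ = 1 := by
  refine ⟨fun hγ => ?_, fun h => h ▸ IsOfFinOrder.one⟩
  by_cases hg : γ.1.right = 1
  · have hleft : γ.1.left = 1 := funext fun x =>
      left_apply_eq_one_of_isOfFinOrder hσ hγ (by rw [hg, one_smul])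
    ext1
    ext1 <;> simp [hleft, hg]
  · obtain ⟨x, hx, hσx⟩ := hfix _ hg
    refine absurd ?_ hσx
    rw [← γ.2 x, left_apply_eq_one_of_isOfFinOrder hσ hγ hx]
    simp

end cocycleExtension

end PermAffine

open cocycleExtension in
theorem exists_bieberbachGroup_of_isPermCocycle {H X : Type} [Group H] [Finite H] [MulAction H X]
    [Finite X] [FaithfulSMul H X] {σ : H → X → UnitAddCircle} (hσ : IsPermCocycle σ)
    (hfix : ∀ g : H, g ≠ 1 → ∃ x : X, g • x = x ∧ σ g x ≠ 0) :
    ∃ B : BieberbachGroup (Nat.card X), Nonempty ((B.carrier ⧸ B.A) ≃* H) :=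
  ⟨{ carrier := cocycleExtension hσ
     torsionFree := fun _ hγ hfin => hγ ((isOfFinOrder_iff_eq_one hσ hfix).1 hfin)
     A := (holonomy hσ).ker
     normal := inferInstance
     freeAbelianRank := ⟨(kerHolonomyEquiv hσ).trans
       (AddEquiv.arrowCongr (Finite.equivFin X) (AddEquiv.refl ℤ)).toMultiplicative⟩
     finiteIndex := inferInstance
     maxAbelian := centralizer_ker_holonomy hσ },
   ⟨QuotientGroup.quotientKerEquivOfSurjective _ (holonomy_surjective hσ)⟩⟩

theorem exists_injective_addMonoidHom_unitAddCircle (A : Type*) [AddGroup A] [Finite A]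
    [IsAddCyclic A] : ∃ χ : A →+ UnitAddCircle, Injective χ := by
  have : NeZero (Nat.card A) := ⟨Nat.card_pos.ne'⟩
  exact ⟨ZMod.toAddCircle.comp (zmodAddCyclicAddEquiv inferInstance).symm.toAddMonoidHom,
    (ZMod.toAddCircle_injective _).comp (AddEquiv.injective _)⟩

section InducedCocycle

variable {H : Type*} [Group H] (K : Subgroup H)

theorem out_smul_inv_mul_mul_out_mem (g : H) (c : H ⧸ K) : (g • c).out⁻¹ * (g * c.out) ∈ K := by
  rw [← QuotientGroup.eq, QuotientGroup.out_eq', ← smul_eq_mul, ← MulAction.Quotient.smul_mk,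
    QuotientGroup.out_eq']

/-- The cocycle of Shapiro's lemma, built from the coset representatives `c.out`. -/
noncomputable def cosetCocycle (g : H) (c : H ⧸ K) : K :=
  ⟨(g⁻¹ • c).out⁻¹ * (g⁻¹ * c.out), out_smul_inv_mul_mul_out_mem K g⁻¹ c⟩

theorem cosetCocycle_mul (g h : H) (c : H ⧸ K) :
    cosetCocycle K (g * h) c = cosetCocycle K h (g⁻¹ • c) * cosetCocycle K g c := by
  ext
  simp [cosetCocycle, mul_smul, mul_assoc]

variable {K} {M : Type*} [AddCommGroup M] (χ : Additive K →+ M)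

noncomputable def inducedCocycle (g : H) (c : H ⧸ K) : M := χ (Additive.ofMul (cosetCocycle K g c))

theorem isPermCocycle_inducedCocycle : IsPermCocycle (inducedCocycle χ) := by
  intro g h c
  simp [inducedCocycle, cosetCocycle_mul, add_comm]

theorem inducedCocycle_mk_one_of_mem {g : H} (hg : g ∈ K) :
    inducedCocycle χ g ((1 : H) : H ⧸ K) = -χ (Additive.ofMul ⟨g, hg⟩) := by
  set o : K := ⟨((1 : H) : H ⧸ K).out, by
    simpa using QuotientGroup.eq.1 (QuotientGroup.out_eq' ((1 : H) : H ⧸ K))⟩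
  have hfix : g⁻¹ • ((1 : H) : H ⧸ K) = (1 : H) := by
    rw [MulAction.Quotient.smul_mk, smul_eq_mul, mul_one, QuotientGroup.eq, mul_one, inv_inv]
    exact hg
  have : cosetCocycle K g ((1 : H) : H ⧸ K) = o⁻¹ * ⟨g, hg⟩⁻¹ * o := by
    ext
    simp [cosetCocycle, hfix, o, mul_assoc]
  rw [inducedCocycle, this]
  simp only [ofMul_mul, ofMul_inv, map_add, map_neg]
  abel

open Subgroup

instance faithfulSMul_sigma_quotient_zpowers : FaithfulSMul H (Σ s : H, H ⧸ zpowers s) :=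
  have : FaithfulSMul H (H ⧸ zpowers (1 : H)) := ⟨fun h => by
    have := h ((1 : H) : H ⧸ zpowers (1 : H))
    rwa [MulAction.Quotient.smul_mk, MulAction.Quotient.smul_mk, smul_eq_mul, smul_eq_mul, mul_one,
      mul_one, QuotientGroup.eq, zpowers_one_eq_bot, mem_bot, inv_mul_eq_one] at this⟩
  Sigma.FaithfulSMul' (1 : H)

theorem exists_isPermCocycle_sigma_quotient_zpowers [Finite H] :
    ∃ σ : H → (Σ s : H, H ⧸ zpowers s) → UnitAddCircle, IsPermCocycle σ ∧
      ∀ g : H, g ≠ 1 → ∃ x, g • x = x ∧ σ g x ≠ 0 := by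
  choose χ hχ using fun s : H => exists_injective_addMonoidHom_unitAddCircle (Additive (zpowers s))
  refine ⟨fun g x => inducedCocycle (χ x.1) g x.2,
    IsPermCocycle.sigma fun s => isPermCocycle_inducedCocycle (χ s), fun g hg => ?_⟩
  refine ⟨⟨g, ((1 : H) : H ⧸ zpowers g)⟩, ?_, ?_⟩
  · rw [Sigma.smul_mk]
    refine congrArg (Sigma.mk g) ?_
    rw [MulAction.Quotient.smul_mk, smul_eq_mul, mul_one, QuotientGroup.eq, mul_one]
    exact inv_mem (mem_zpowers g)
  · dsimp only
    rw [inducedCocycle_mk_one_of_mem _ (mem_zpowers g), neg_ne_zero, ← map_zero (χ g),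
      (hχ g).ne_iff, Ne, ofMul_eq_zero, Subtype.ext_iff]
    exact hg

end InducedCocycle

/-- **Realization theorem (Auslander–Kuranishi).**  Every finite group `G` is the holonomy
group of some flat manifold: there exist `n : ℕ` and a Bieberbach group `Γ` of dimension `n`
whose holonomy group `Γ/A` is isomorphic to `G`. -/
theorem exists_bieberbach_with_holonomy (G : Type*) [Group G] [Finite G] :
    ∃ (n : ℕ) (B : BieberbachGroup n), Nonempty ((B.carrier ⧸ B.A) ≃* G) := by
  obtain ⟨σ, hσ, hfix⟩ := exists_isPermCocycle_sigma_quotient_zpowers (H := Shrink.{0} G)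
  obtain ⟨B, ⟨e⟩⟩ := exists_bieberbachGroup_of_isPermCocycle hσ hfix
  exact ⟨_, B, ⟨e.trans Shrink.mulEquiv⟩⟩
end
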